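/- arXiv:2312.11657 — 4 statements merged into one kernel-verified Lean document; each statement's English description precedes it below -/
import Mathlib

section
/- Let λ ∈ Y_m be a partition and γ ∈ (Z_{≥0})^k a composition with γ_i > γ_{i+1} for some 1 ≤ i < k. Define c_j = #{r : λ_r ≥ γ_j + 1} + #{r > j : γ_r = γ_j} + #{r : γ_r > γ_j} for each j. Let u = (m+i, γ_{i+1}+1) be a box in the diagram of the concatenated composition (λ⁻ | γ), where λ⁻ is the weakly increasing rearrangement of λ. Then c_{i+1} - c_i = a(u), where a(u) = #{r : γ_i ≥ λ_r ≥ γ_{i+1}+1} + #{r < i : γ_i ≥ γ_r ≥ γ_{i+1}+1} + #{r > i+1 : γ_i > γ_r ≥ γ_{i+1}} + 1 is the arm length of u in dg(λ⁻ | γ). -/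
/-!
The difference `c_{i+1} - c_i` splits into a `λ`-part and a `γ`-part. In the `λ`-part, raising
the threshold from `γ_{i+1}` to `γ_i` loses exactly the `λ_r` in `(γ_{i+1}, γ_i]`. In the
`γ`-part one compares, index by index, what `r` contributes to `c_{i+1}` and to `c_i`: indices
`r < i` contribute when `γ_r ∈ (γ_{i+1}, γ_i]`, indices `r > i + 1` when `γ_r ∈ [γ_{i+1}, γ_i)`,
`r = i` contributes the `1`, and `r = i + 1` nothing.
-/

open Finset

/-- `c_j` of the bijection of Carlsson–Gorsky–Mellit. -/
def cWt {m k : ℕ} (lam : Fin m → ℕ) (gam : Fin k → ℕ) (j : Fin k) : ℕ :=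
  (univ.filter (fun r : Fin m => gam j + 1 ≤ lam r)).card
    + (univ.filter (fun r : Fin k => j < r ∧ gam r = gam j)).card
    + (univ.filter (fun r : Fin k => gam j < gam r)).card

theorem card_filter_le_eq_card_filter_le_le_add {α : Type*} (s : Finset α) (f : α → ℕ)
    {a b : ℕ} (hab : a ≤ b + 1) :
    #{r ∈ s | a ≤ f r} = #{r ∈ s | a ≤ f r ∧ f r ≤ b} + #{r ∈ s | b + 1 ≤ f r} := by
  rw [← card_filter_add_card_filter_not (s := {r ∈ s | a ≤ f r}) (f · ≤ b), filter_filter,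
    filter_filter]
  congr 2
  exact filter_congr fun r _ => by omega

theorem gamma_count_succ_eq_add_arm_ite {i r x y z : ℕ} (hzy : z < y)
    (hi : r = i → x = y) (hsucc : r = i + 1 → x = z) :
    (if i + 1 < r ∧ x = z then 1 else 0) + (if z < x then 1 else 0) =
      (if i < r ∧ x = y then 1 else 0) + (if y < x then 1 else 0) +
        ((if r < i ∧ z + 1 ≤ x ∧ x ≤ y then 1 else 0) +
          (if i + 1 < r ∧ z ≤ x ∧ x < y then 1 else 0) + (if r = i then 1 else 0)) := by
  rcases Nat.lt_trichotomy r i with h | rfl | h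
  · split_ifs <;> omega
  · have := hi rfl
    split_ifs <;> omega
  · rcases (Nat.succ_le_of_lt h).lt_or_eq with h' | h'
    · split_ifs <;> omega
    · have := hsucc h'.symm
      split_ifs <;> omega

theorem gamma_count_succ_eq_add_arm {k : ℕ} (gam : Fin k → ℕ) (i i' : Fin k)
    (hi' : (i' : ℕ) = i + 1) (hgam : gam i' < gam i) :
    #{r | i' < r ∧ gam r = gam i'} + #{r | gam i' < gam r} =
      #{r | i < r ∧ gam r = gam i} + #{r | gam i < gam r} +
        (#{r | r < i ∧ gam i' + 1 ≤ gam r ∧ gam r ≤ gam i}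
          + #{r : Fin k | (i : ℕ) + 1 < (r : ℕ) ∧ gam i' ≤ gam r ∧ gam r < gam i} + 1) := by
  have hone : #{r | r = i} = 1 := by rw [filter_eq', if_pos (mem_univ i), card_singleton]
  conv_rhs => enter [2, 2]; rw [← hone]
  simp only [card_filter, ← sum_add_distrib]
  refine sum_congr rfl fun r _ => ?_
  simpa only [Fin.lt_def, Fin.ext_iff, hi'] using
    gamma_count_succ_eq_add_arm_ite (r := r) (x := gam r) hgam (fun h => by rw [Fin.ext h])
      (fun h => by rw [Fin.ext (h.trans hi'.symm)])

theorem arm_eq_weight_difference_general {m k : ℕ} (lam : Fin m → ℕ) (gam : Fin k → ℕ)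
    (i : Fin k) (hi : (i : ℕ) + 1 < k)
    (hgam : gam ⟨(i : ℕ) + 1, hi⟩ < gam i) :
    (cWt lam gam ⟨(i : ℕ) + 1, hi⟩ : ℤ) - cWt lam gam i =
      ((univ.filter (fun r : Fin m =>
          gam ⟨(i : ℕ) + 1, hi⟩ + 1 ≤ lam r ∧ lam r ≤ gam i)).card
        + (univ.filter (fun r : Fin k =>
            r < i ∧ gam ⟨(i : ℕ) + 1, hi⟩ + 1 ≤ gam r ∧ gam r ≤ gam i)).card
        + (univ.filter (fun r : Fin k =>
            ((i : ℕ) + 1 : ℕ) < (r : ℕ) ∧ gam ⟨(i : ℕ) + 1, hi⟩ ≤ gam r ∧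
              gam r < gam i)).card
        + 1 : ℕ) := by
  have hlam_part := card_filter_le_eq_card_filter_le_le_add univ lam
    (a := gam ⟨(i : ℕ) + 1, hi⟩ + 1) (b := gam i) (by omega)
  have hgam_part := gamma_count_succ_eq_add_arm gam i ⟨(i : ℕ) + 1, hi⟩ rfl hgam
  unfold cWt
  omega

theorem arm_eq_weight_difference {m k : ℕ} (lam : Fin m → ℕ) (gam : Fin k → ℕ)
    (hlam : Antitone lam) (i : Fin k) (hi : (i : ℕ) + 1 < k)
    (hgam : gam ⟨(i : ℕ) + 1, hi⟩ < gam i) :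
    (cWt lam gam ⟨(i : ℕ) + 1, hi⟩ : ℤ) - cWt lam gam i =
      ((univ.filter (fun r : Fin m =>
          gam ⟨(i : ℕ) + 1, hi⟩ + 1 ≤ lam r ∧ lam r ≤ gam i)).card
        + (univ.filter (fun r : Fin k =>
            r < i ∧ gam ⟨(i : ℕ) + 1, hi⟩ + 1 ≤ gam r ∧ gam r ≤ gam i)).card
        + (univ.filter (fun r : Fin k =>
            ((i : ℕ) + 1 : ℕ) < (r : ℕ) ∧ gam ⟨(i : ℕ) + 1, hi⟩ ≤ gam r ∧
              gam r < gam i)).card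
        + 1 : ℕ) :=
  arm_eq_weight_difference_general lam gam i hi hgam
end

section
/- With λ a partition, γ a composition with γ_i > γ_{i+1}, weights w_j = q^{γ_j} t^{c_j} where c_j = #{r : λ_r ≥ γ_j+1} + #{r > j : γ_r = γ_j} + #{r : γ_r > γ_j}, and u = (m+i, γ_{i+1}+1) the box in dg(λ⁻ | γ), one has w_i / w_{i+1} = q^{l(u)+1} t^{-a(u)}, where l and a are the leg and arm lengths of u in dg(λ⁻ | γ). -/
/-!
STATEMENT 6: With `λ` a partition, `γ` a composition with `γ_i > γ_{i+1}`, weights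
`w_j = q^{γ_j} t^{c_j}` where
`c_j = #{r : λ_r ≥ γ_j+1} + #{r > j : γ_r = γ_j} + #{r : γ_r > γ_j}`,
and `u = (m+i, γ_{i+1}+1)` the box in `dg(λ⁻|γ)`, one has
`w_i / w_{i+1} = q^{l(u)+1} t^{-a(u)}`, with leg `l(u) = γ_i - (γ_{i+1}+1)` and arm
`a(u) = #{r : γ_i ≥ λ_r ≥ γ_{i+1}+1} + #{r < i : γ_i ≥ γ_r ≥ γ_{i+1}+1}
        + #{r > i+1 : γ_i > γ_r ≥ γ_{i+1}} + 1`.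
-/

open Finset

/-- Arm of the box `u = (m+i, γ_{i+1}+1)` in `dg(λ⁻|γ)` (computed as in the paper). -/
def armU {m k : ℕ} (lam : Fin m → ℕ) (gam : Fin k → ℕ) (i : Fin k)
    (hi : (i : ℕ) + 1 < k) : ℕ :=
  (univ.filter (fun r : Fin m =>
      gam ⟨(i : ℕ) + 1, hi⟩ + 1 ≤ lam r ∧ lam r ≤ gam i)).card
    + (univ.filter (fun r : Fin k =>
        r < i ∧ gam ⟨(i : ℕ) + 1, hi⟩ + 1 ≤ gam r ∧ gam r ≤ gam i)).card
    + (univ.filter (fun r : Fin k =>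
        ((i : ℕ) + 1 : ℕ) < (r : ℕ) ∧ gam ⟨(i : ℕ) + 1, hi⟩ ≤ gam r ∧
          gam r < gam i)).card
    + 1

/-! Since `γ_{i+1} < γ_i`, the counts in `c_{i+1}` split as those in `c_i` plus the boxes of the
arm of `u`: the parts `λ_r` and `γ_r` lying between the two thresholds. The remaining `+ 1` is
`γ_i` itself, a part larger than `γ_{i+1}`. Hence `c_{i+1} = c_i + a(u)`, and the ratio of
the weights follows. -/

lemma card_filter_le_eq_add_card_filter_le_le {ι : Type*} [Fintype ι] (f : ι → ℕ) {a b : ℕ}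
    (hab : a ≤ b + 1) :
    #{r | a ≤ f r} = #{r | b + 1 ≤ f r} + #{r | a ≤ f r ∧ f r ≤ b} := by
  simp only [card_filter, ← sum_add_distrib]
  exact sum_congr rfl fun r _ => by split_ifs <;> omega

lemma card_filter_eq_add_card_filter_lt_succ {k : ℕ} (gam : Fin k → ℕ) (i : Fin k)
    (hi : (i : ℕ) + 1 < k) (hgam : gam ⟨(i : ℕ) + 1, hi⟩ < gam i) :
    #{r | (⟨(i : ℕ) + 1, hi⟩ : Fin k) < r ∧ gam r = gam ⟨(i : ℕ) + 1, hi⟩}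
        + #{r | gam ⟨(i : ℕ) + 1, hi⟩ < gam r} =
      #{r | i < r ∧ gam r = gam i} + #{r | gam i < gam r}
        + #{r | r < i ∧ gam ⟨(i : ℕ) + 1, hi⟩ + 1 ≤ gam r ∧ gam r ≤ gam i}
        + #{r : Fin k | (i : ℕ) + 1 < (r : ℕ) ∧ gam ⟨(i : ℕ) + 1, hi⟩ ≤ gam r ∧ gam r < gam i}
        + #{r | r = i} := by
  simp only [card_filter, ← sum_add_distrib]
  refine sum_congr rfl fun r _ => ?_
  simp only [Fin.lt_def, Fin.ext_iff]
  obtain rfl | hri := eq_or_ne r i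
  · split_ifs <;> omega
  obtain rfl | hrs := eq_or_ne r ⟨(i : ℕ) + 1, hi⟩
  · split_ifs <;> omega
  have := Fin.val_ne_of_ne hri
  have := Fin.val_ne_of_ne hrs
  simp only at this
  split_ifs <;> omega

lemma cWt_succ_eq {m k : ℕ} (lam : Fin m → ℕ) (gam : Fin k → ℕ)
    (i : Fin k) (hi : (i : ℕ) + 1 < k) (hgam : gam ⟨(i : ℕ) + 1, hi⟩ < gam i) :
    cWt lam gam ⟨(i : ℕ) + 1, hi⟩ = cWt lam gam i + armU lam gam i hi := by
  have hlam := card_filter_le_eq_add_card_filter_le_le lam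
    (a := gam ⟨(i : ℕ) + 1, hi⟩ + 1) (b := gam i) (by omega)
  have hgam := card_filter_eq_add_card_filter_lt_succ gam i hi hgam
  rw [filter_eq', if_pos (mem_univ i), card_singleton] at hgam
  unfold cWt armU
  omega

lemma div_pow_mul_pow_eq {K : Type*} [Field K] {q t : K} (hq : q ≠ 0) (ht : t ≠ 0)
    (b e c n : ℕ) :
    (q ^ (b + e) * t ^ c) / (q ^ b * t ^ (c + n)) = q ^ e * t ^ (-(n : ℤ)) := by
  rw [zpow_neg, zpow_natCast, pow_add, pow_add]
  field_simp

theorem weight_ratio_general {K : Type*} [Field K] (q t : K) (hq : q ≠ 0) (ht : t ≠ 0)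
    {m k : ℕ} (lam : Fin m → ℕ) (gam : Fin k → ℕ)
    (i : Fin k) (hi : (i : ℕ) + 1 < k) (hgam : gam ⟨(i : ℕ) + 1, hi⟩ < gam i) :
    (q ^ gam i * t ^ cWt lam gam i) /
        (q ^ gam ⟨(i : ℕ) + 1, hi⟩ * t ^ cWt lam gam ⟨(i : ℕ) + 1, hi⟩) =
      q ^ ((gam i - (gam ⟨(i : ℕ) + 1, hi⟩ + 1)) + 1) *
        t ^ (-(armU lam gam i hi : ℤ)) := by
  rw [cWt_succ_eq lam gam i hi hgam, ← div_pow_mul_pow_eq hq ht (gam ⟨(i : ℕ) + 1, hi⟩)]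
  congr 3
  omega

theorem weight_ratio {K : Type*} [Field K] (q t : K) (hq : q ≠ 0) (ht : t ≠ 0)
    {m k : ℕ} (lam : Fin m → ℕ) (gam : Fin k → ℕ) (hlam : Antitone lam)
    (i : Fin k) (hi : (i : ℕ) + 1 < k) (hgam : gam ⟨(i : ℕ) + 1, hi⟩ < gam i) :
    (q ^ gam i * t ^ cWt lam gam i) /
        (q ^ gam ⟨(i : ℕ) + 1, hi⟩ * t ^ cWt lam gam ⟨(i : ℕ) + 1, hi⟩) =
      q ^ ((gam i - (gam ⟨(i : ℕ) + 1, hi⟩ + 1)) + 1) *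
        t ^ (-(armU lam gam i hi : ℤ)) :=
  weight_ratio_general q t hq ht lam gam i hi hgam
end

section
/- The map φ sending a pair (μ, w) — where μ is a partition and w = (w_1,...,w_k) records the T-weights of an ordered removal of a horizontal strip of k boxes from μ, each box being at the top of its column — to the pair (λ | γ), where γ_i is the row coordinate of the box with weight w_i and λ is the transpose of the partition obtained from μ by removing all columns containing a removed box, is a bijection from the set of such pairs (μ,w) with |μ| = n onto the set of pairs (λ, γ) ∈ Y × (Z_{≥0})^k with |λ| + |γ| = n - k. -/
/-!
Write `μ` for the column heights, `b` for the removed columns and `(λ, γ) = φ(μ, b)`. The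
columns of `μ` taller than `j` are the untouched ones, counted by `λ j`, together with the
removed ones, i.e. the labels `i` with `j ≤ γ i`; so the row lengths of `μ` are
`λ j + #{i | j ≤ γ i}` and `μ` is their conjugate. The removal condition says exactly that
among columns of equal height the removed ones are rightmost, and that later-removed ones lie
further left; hence `b` is strictly decreasing in the lexicographic order of `(γ i, i)` and
`b i = λ (γ i) + #{x | (γ i, i) < (γ x, x)}`. This recovers `(μ, b)` from `(λ, γ)`, and
conversely the columns placed by this formula satisfy the removal condition.
-/

open Finset

/-- The predicate encoding a `T`-fixed point of `PFH_{n,n-k}`: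
`p.1` = column heights of `μ`, `p.2` = columns of the ordered removed boxes. -/
def IsFixedPoint (n k : ℕ) (p : (ℕ → ℕ) × (Fin k → ℕ)) : Prop :=
  Antitone p.1 ∧ (Function.support p.1).Finite ∧ (∑ᶠ c, p.1 c) = n ∧
    Function.Injective p.2 ∧ (∀ i, 0 < p.1 (p.2 i)) ∧
    ∀ j : ℕ, Antitone (fun c => p.1 c - Set.ncard {i : Fin k | (i : ℕ) < j ∧ p.2 i = c})

/-- The predicate encoding a pair `(λ | γ)` with `λ` a partition (listed as
`q.1 0 ≥ q.1 1 ≥ ⋯`), `γ = q.2 ∈ (ℤ_{≥0})^k`, and `|λ| + |γ| = n - k`. -/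
def IsPSPair (n k : ℕ) (q : (ℕ → ℕ) × (Fin k → ℕ)) : Prop :=
  Antitone q.1 ∧ (Function.support q.1).Finite ∧
    (∑ᶠ j, q.1 j) + (∑ i, q.2 i) + k = n

/-- The map `φ`: `γ_i` is the (0-indexed) row of the `i`-th removed box, and
`λ_{j+1}` is the number of columns of `μ` not containing a removed box and of height
at least `j+1` (i.e. `λ` is the transpose of `μ` with the touched columns deleted). -/
noncomputable def phiCGM (k : ℕ) (p : (ℕ → ℕ) × (Fin k → ℕ)) :
    (ℕ → ℕ) × (Fin k → ℕ) :=
  (fun j => Set.ncard {c : ℕ | (∀ i, p.2 i ≠ c) ∧ j + 1 ≤ p.1 c},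
   fun i => p.1 (p.2 i) - 1)

open Function

noncomputable def conjugate {α : Type*} (f : α → ℕ) (j : ℕ) : ℕ := {a | j < f a}.ncard

section conjugate
variable {α : Type*} {f : α → ℕ}

theorem conjugate_antitone (hf : (support f).Finite) : Antitone (conjugate f) :=
  fun i j hij => Set.ncard_le_ncard (fun a (ha : j < f a) => (hij.trans_lt ha : i < f a))
    (hf.subset fun a (ha : i < f a) => (Nat.zero_le i).trans_lt ha |>.ne')

theorem support_conjugate_subset (hf : (support f).Finite) :
    support (conjugate f) ⊆ Set.Iio (hf.toFinset.sup f) := fun j hj => by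
  obtain ⟨a, ha : j < f a⟩ := Set.nonempty_of_ncard_ne_zero hj
  exact ha.trans_le (le_sup (hf.mem_toFinset.2 (Nat.ne_zero_of_lt ha)))

theorem finite_support_conjugate (hf : (support f).Finite) : (support (conjugate f)).Finite :=
  (Set.finite_Iio _).subset (support_conjugate_subset hf)

theorem finsum_conjugate (hf : (support f).Finite) : ∑ᶠ j, conjugate f j = ∑ᶠ a, f a := by
  classical
  set s := hf.toFinset
  have hconj : ∀ j, conjugate f j = #(s.bipartiteAbove (· < f ·) j) := fun j => by
    rw [conjugate, ← Set.ncard_coe_finset]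
    congr 1
    ext a
    simp only [Set.mem_ofPred_eq, coe_filter, bipartiteAbove, s, Set.Finite.mem_toFinset,
      mem_support]
    omega
  rw [finsum_eq_sum_of_support_subset _ (s := range (s.sup f))
      (by rw [coe_range]; exact support_conjugate_subset hf),
    finsum_eq_sum_of_support_subset f hf.coe_toFinset.ge]
  simp_rw [hconj, sum_card_bipartiteAbove_eq_sum_card_bipartiteBelow]
  refine sum_congr rfl fun a ha => ?_
  have hrange : (range (s.sup f)).bipartiteBelow (· < f ·) a = range (f a) := by
    ext j
    have := le_sup (f := f) (s := s) ha
    simp only [bipartiteBelow, mem_filter, mem_range]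
    omega
  rw [hrange, card_range]

end conjugate

section antitone
variable {f : ℕ → ℕ} (hf : Antitone f) (hs : (support f).Finite)
include hf hs

theorem setOf_lt_eq_Iio_conjugate (j : ℕ) : {c | j < f c} = Set.Iio (conjugate f j) := by
  have hex : ∃ c, f c ≤ j := by
    obtain ⟨c, hc⟩ := hs.exists_notMem
    exact ⟨c, (notMem_support.1 hc).trans_le (Nat.zero_le j)⟩
  have hIio : {c | j < f c} = Set.Iio (Nat.find hex) := by
    ext c
    simp only [Set.mem_ofPred_eq, Set.mem_Iio, Nat.lt_find_iff, not_le]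
    exact ⟨fun h m hm => h.trans_le (hf hm), fun h => h c le_rfl⟩
  rw [conjugate, hIio, Set.ncard_Iio_nat]

theorem lt_conjugate_iff {c j : ℕ} : c < conjugate f j ↔ j < f c := by
  rw [← Set.mem_Iio, ← setOf_lt_eq_Iio_conjugate hf hs]
  rfl

theorem conjugate_conjugate : conjugate (conjugate f) = f := by
  funext c
  change {j | c < conjugate f j}.ncard = f c
  simp only [lt_conjugate_iff hf hs]
  exact Set.ncard_Iio_nat (f c)

end antitone

theorem ncard_eq_ncard_notMem_range_add {α ι : Type*} {b : ι → α} (hb : Injective b)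
    {P : α → Prop} (hP : {a | P a}.Finite) :
    {a | P a}.ncard = {a | (∀ i, b i ≠ a) ∧ P a}.ncard + {i | P (b i)}.ncard := by
  have hsplit : {a | P a} = {a | (∀ i, b i ≠ a) ∧ P a} ∪ b '' {i | P (b i)} := by
    ext a
    by_cases ha : ∃ i, b i = a
    · obtain ⟨i, rfl⟩ := ha
      simp [hb.eq_iff]
    · push Not at ha
      simp [ha]
  have hdisj : Disjoint {a | (∀ i, b i ≠ a) ∧ P a} (b '' {i | P (b i)}) :=
    Set.disjoint_left.2 fun _ ha ⟨i, _, hi⟩ => ha.1 i hi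
  rw [hsplit, Set.ncard_union_eq hdisj (hP.subset fun a ha => ha.2)
    (hP.subset (by rintro _ ⟨i, hi, rfl⟩; exact hi)), Set.ncard_image_of_injective _ hb]

section labelRank
variable {ι : Type*} [LinearOrder ι]

noncomputable def labelRank (γ : ι → ℕ) (i : ι) : ℕ :=
  {x | toLex (γ i, i) < toLex (γ x, x)}.ncard

def StrictAntiLex (γ b : ι → ℕ) : Prop :=
  ∀ ⦃i x⦄, toLex (γ i, i) < toLex (γ x, x) → b x < b i

theorem StrictAntiLex.lt_iff {γ b : ι → ℕ} (h : StrictAntiLex γ b) {i x : ι} :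
    b x < b i ↔ toLex (γ i, i) < toLex (γ x, x) := by
  refine ⟨fun hbx => ?_, fun hix => h hix⟩
  rcases lt_trichotomy (toLex (γ i, i)) (toLex (γ x, x)) with hlt | heq | hgt
  · exact hlt
  · cases (Prod.ext_iff.1 (toLex.injective heq)).2
    exact absurd hbx (lt_irrefl _)
  · exact absurd (h hgt) hbx.asymm

theorem StrictAntiLex.injective {γ b : ι → ℕ} (h : StrictAntiLex γ b) : Injective b := by
  intro i x hix
  by_contra hne
  rcases lt_or_gt_of_ne (a := toLex (γ i, i)) (b := toLex (γ x, x)) (by simp [hne])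
    with hlt | hlt
  · exact (h hlt).ne hix.symm
  · exact (h hlt).ne hix

variable [Finite ι] (γ : ι → ℕ)

theorem ncard_lt_le_labelRank (i : ι) : {x | γ i < γ x}.ncard ≤ labelRank γ i :=
  Set.ncard_le_ncard fun _ hx => Prod.Lex.toLex_lt_toLex.2 (Or.inl hx)

theorem labelRank_lt_ncard_le (i : ι) : labelRank γ i < {x | γ i ≤ γ x}.ncard := by
  refine Set.ncard_lt_ncard ⟨fun x hx => Prod.Lex.monotone_fst_ofLex (le_of_lt hx),
    fun h => lt_irrefl (toLex (γ i, i)) (h (le_refl (γ i)))⟩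

theorem strictAntiLex_add_labelRank {l : ℕ → ℕ} (hl : Antitone l) :
    StrictAntiLex γ fun i => l (γ i) + labelRank γ i := by
  intro i x hix
  have hγ : γ i ≤ γ x := Prod.Lex.monotone_fst_ofLex hix.le
  have hrank : labelRank γ x < labelRank γ i :=
    Set.ncard_lt_ncard ⟨fun y hy => hix.trans hy, fun h => lt_irrefl (toLex (γ x, x)) (h hix)⟩
  have := hl hγ
  dsimp only
  omega

end labelRank

noncomputable def rowLengths {k : ℕ} (q : (ℕ → ℕ) × (Fin k → ℕ)) : ℕ → ℕ :=
  q.1 + conjugate (q.2 · + 1)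

/-- Label `i` becomes a column of height `γ i + 1`, placed right of the unlabelled columns of
that height; equally tall labelled columns carry labels increasing from right to left. -/
noncomputable def psiCGM (k : ℕ) (q : (ℕ → ℕ) × (Fin k → ℕ)) :
    (ℕ → ℕ) × (Fin k → ℕ) :=
  (conjugate (rowLengths q), fun i => q.1 (q.2 i) + labelRank q.2 i)

section psi
variable {k : ℕ} {q : (ℕ → ℕ) × (Fin k → ℕ)}

theorem antitone_rowLengths (ha : Antitone q.1) : Antitone (rowLengths q) :=
  ha.add (conjugate_antitone (Set.toFinite _))

theorem finite_support_rowLengths (hs : (support q.1).Finite) :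
    (support (rowLengths q)).Finite :=
  (hs.union (finite_support_conjugate (Set.toFinite _))).subset (support_add _ _)

theorem finsum_rowLengths (hs : (support q.1).Finite) :
    ∑ᶠ j, rowLengths q j = ∑ᶠ j, q.1 j + ∑ i, q.2 i + k := by
  simp only [rowLengths, Pi.add_apply]
  rw [finsum_add_distrib hs (finite_support_conjugate (Set.toFinite _)),
    finsum_conjugate (Set.toFinite _), finsum_eq_sum_of_fintype (fun i : Fin k => q.2 i + 1),
    sum_add_distrib, sum_const, card_univ, Fintype.card_fin, smul_eq_mul, mul_one, add_assoc]

theorem psiCGM_fst_apply_snd (ha : Antitone q.1) (hs : (support q.1).Finite) (i : Fin k) :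
    (psiCGM k q).1 ((psiCGM k q).2 i) = q.2 i + 1 := by
  have hlt : (psiCGM k q).2 i < rowLengths q (q.2 i) := by
    have := labelRank_lt_ncard_le q.2 i
    simp only [psiCGM, rowLengths, Pi.add_apply, conjugate, Nat.lt_add_one_iff]
    omega
  have hge : rowLengths q (q.2 i + 1) ≤ (psiCGM k q).2 i := by
    have := ncard_lt_le_labelRank q.2 i
    have := ha (Nat.le_add_right (q.2 i) 1)
    simp only [psiCGM, rowLengths, Pi.add_apply, conjugate, Nat.add_lt_add_iff_right]
    omega
  have h1 := (lt_conjugate_iff (antitone_rowLengths ha) (finite_support_rowLengths hs)).2 hlt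
  have h2 := (lt_conjugate_iff (antitone_rowLengths ha) (finite_support_rowLengths hs)
    (c := q.2 i + 1)).not.2 hge.not_gt
  exact le_antisymm (not_lt.1 h2) h1

end psi

section phi
variable {k : ℕ} {p : (ℕ → ℕ) × (Fin k → ℕ)}

theorem conjugate_eq_phiCGM_fst_add (hs : (support p.1).Finite) (hb : Injective p.2) (j : ℕ) :
    conjugate p.1 j = (phiCGM k p).1 j + conjugate (p.1 ∘ p.2) j :=
  ncard_eq_ncard_notMem_range_add hb (hs.subset fun _ hc => Nat.ne_zero_of_lt hc)

theorem rowLengths_phiCGM (hs : (support p.1).Finite) (hb : Injective p.2)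
    (hpos : ∀ i, 0 < p.1 (p.2 i)) : rowLengths (phiCGM k p) = conjugate p.1 := by
  have hγ : (fun i => (phiCGM k p).2 i + 1) = p.1 ∘ p.2 :=
    funext fun i => Nat.sub_add_cancel (hpos i)
  funext j
  rw [rowLengths, Pi.add_apply, hγ, conjugate_eq_phiCGM_fst_add hs hb]

theorem antitone_phiCGM_fst (hs : (support p.1).Finite) : Antitone (phiCGM k p).1 :=
  fun _ _ hjj' =>
    Set.ncard_le_ncard (fun _ hc => ⟨hc.1, (Nat.add_le_add_right hjj' 1).trans hc.2⟩)
    (hs.subset fun _ hc => Nat.ne_zero_of_lt hc.2)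

theorem phiCGM_fst_apply_snd (hpos : ∀ i, 0 < p.1 (p.2 i)) (i : Fin k) :
    (phiCGM k p).1 ((phiCGM k p).2 i) =
      {c | (∀ x, p.2 x ≠ c) ∧ p.1 (p.2 i) ≤ p.1 c}.ncard := by
  simp only [phiCGM]
  rw [Nat.sub_add_cancel (hpos i)]

theorem ncard_removed_eq_ite (hb : Injective p.2) (j c : ℕ) :
    {i : Fin k | (i : ℕ) < j ∧ p.2 i = c}.ncard =
      if ∃ i : Fin k, (i : ℕ) < j ∧ p.2 i = c then 1 else 0 := by
  split_ifs with h
  · obtain ⟨i₀, hi₀⟩ := h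
    exact Set.ncard_eq_one.2 ⟨i₀, Set.ext fun i => ⟨fun hi => hb (hi.2.trans hi₀.2.symm),
      fun hi => hi ▸ hi₀⟩⟩
  · exact (Set.ncard_eq_zero (Set.toFinite _)).2
      (Set.eq_empty_of_forall_notMem fun i hi => h ⟨i, hi⟩)

def RightmostFirst (p : (ℕ → ℕ) × (Fin k → ℕ)) : Prop :=
  ∀ i c, p.2 i < c → p.1 c = p.1 (p.2 i) → ∃ i' < i, p.2 i' = c

def UntouchedLeft (p : (ℕ → ℕ) × (Fin k → ℕ)) : Prop :=
  ∀ i c, (∀ x, p.2 x ≠ c) → p.1 (p.2 i) ≤ p.1 c → c < p.2 i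

theorem antitone_stages_iff (hμ : Antitone p.1) (hb : Injective p.2)
    (hpos : ∀ i, 0 < p.1 (p.2 i)) :
    (∀ j : ℕ, Antitone fun c => p.1 c - {i : Fin k | (i : ℕ) < j ∧ p.2 i = c}.ncard) ↔
      RightmostFirst p := by
  simp only [ncard_removed_eq_ite hb]
  constructor
  · intro h i c hic hcol
    by_contra hne
    push Not at hne
    have hbi : ∃ i' : Fin k, (i' : ℕ) < i + 1 ∧ p.2 i' = p.2 i :=
      ⟨i, Nat.lt_succ_self _, rfl⟩
    have hc : ¬ ∃ i' : Fin k, (i' : ℕ) < i + 1 ∧ p.2 i' = c := by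
      rintro ⟨i', hi', rfl⟩
      rcases (Nat.lt_succ_iff.1 hi').lt_or_eq with h' | h'
      · exact hne i' h' rfl
      · exact hic.ne (congrArg p.2 (Fin.ext h'.symm))
    have hstage := h (i + 1) hic.le
    simp only [if_pos hbi, if_neg hc] at hstage
    have := hpos i
    omega
  · intro h j c c' hcc'
    have hμc := hμ hcc'
    dsimp only
    split_ifs with hc' hc hc <;> try omega
    obtain ⟨i, hij, rfl⟩ := hc
    rcases hcc'.lt_or_eq with hlt | rfl
    · by_contra hgt
      obtain ⟨i', hi'i, rfl⟩ := h i c' hlt (by omega)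
      exact hc' ⟨i', (Fin.lt_def.1 hi'i).trans hij, rfl⟩
    · exact absurd ⟨i, hij, rfl⟩ hc'

theorem RightmostFirst.strictAntiLex (h : RightmostFirst p) (hμ : Antitone p.1)
    (hb : Injective p.2) (hpos : ∀ i, 0 < p.1 (p.2 i)) : StrictAntiLex (phiCGM k p).2 p.2 := by
  intro i x hix
  rcases Prod.Lex.toLex_lt_toLex.1 hix with hγ | ⟨hγ, hix⟩
  · have := hpos i
    exact hμ.reflect_lt (by simp only [phiCGM] at hγ; omega)
  · rcases lt_trichotomy (p.2 x) (p.2 i) with hlt | heq | hgt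
    · exact hlt
    · exact absurd (hb heq) hix.ne'
    · have := hpos i
      have := hpos x
      obtain ⟨i', hi', hbi'⟩ := h i (p.2 x) hgt (by simp only [phiCGM] at hγ; omega)
      exact absurd (hb hbi' ▸ hi') hix.asymm

theorem rightmostFirst_iff_untouchedLeft (hμ : Antitone p.1)
    (hanti : StrictAntiLex (phiCGM k p).2 p.2) : RightmostFirst p ↔ UntouchedLeft p := by
  constructor
  · intro h i c hc hle
    by_contra hge
    push Not at hge
    obtain ⟨i', -, rfl⟩ :=
      h i c (lt_of_le_of_ne hge fun h => hc i h) (le_antisymm (hμ hge) hle)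
    exact hc i' rfl
  · intro hu i c hic hcol
    by_cases ht : ∃ x, p.2 x = c
    · obtain ⟨x, rfl⟩ := ht
      rcases Prod.Lex.toLex_lt_toLex.1 (hanti.lt_iff.1 hic) with h | ⟨-, h⟩
      · simp only [phiCGM, hcol] at h
        exact absurd h (lt_irrefl _)
      · exact ⟨x, h, rfl⟩
    · push Not at ht
      exact absurd (hu i c ht hcol.ge) hic.not_gt

theorem snd_eq_ncard_untouched_add_labelRank (hanti : StrictAntiLex (phiCGM k p).2 p.2)
    (i : Fin k) :
    p.2 i = {c | (∀ x, p.2 x ≠ c) ∧ c < p.2 i}.ncard + labelRank (phiCGM k p).2 i := by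
  have hsplit := ncard_eq_ncard_notMem_range_add hanti.injective (Set.finite_Iio (p.2 i))
  have hleft : {x | p.2 x < p.2 i} =
      {x | toLex ((phiCGM k p).2 i, i) < toLex ((phiCGM k p).2 x, x)} :=
    Set.ext fun _ => hanti.lt_iff
  change (Set.Iio (p.2 i)).ncard = _ at hsplit
  rw [Set.ncard_Iio_nat] at hsplit
  rw [labelRank, ← hleft]
  exact hsplit

theorem psiCGM_phiCGM_snd_eq_iff (hμ : Antitone p.1) (hs : (support p.1).Finite)
    (hpos : ∀ i, 0 < p.1 (p.2 i)) (hanti : StrictAntiLex (phiCGM k p).2 p.2) :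
    (psiCGM k (phiCGM k p)).2 = p.2 ↔ UntouchedLeft p := by
  have hsub : ∀ i, {c | (∀ x, p.2 x ≠ c) ∧ c < p.2 i} ⊆
      {c | (∀ x, p.2 x ≠ c) ∧ p.1 (p.2 i) ≤ p.1 c} := fun i c hc => ⟨hc.1, hμ hc.2.le⟩
  have hfin : ∀ i, {c | (∀ x, p.2 x ≠ c) ∧ p.1 (p.2 i) ≤ p.1 c}.Finite := fun i =>
    hs.subset fun c hc => (Nat.lt_of_lt_of_le (hpos i) hc.2).ne'
  have hbox : ∀ i, (psiCGM k (phiCGM k p)).2 i =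
      {c | (∀ x, p.2 x ≠ c) ∧ p.1 (p.2 i) ≤ p.1 c}.ncard + labelRank (phiCGM k p).2 i :=
    fun i => congrArg (· + _) (phiCGM_fst_apply_snd hpos i)
  constructor
  · intro h i c hc hle
    have hsplit := snd_eq_ncard_untouched_add_labelRank hanti i
    have heq := Set.eq_of_subset_of_ncard_le (hsub i)
      (by have := congrFun h i; rw [hbox] at this; omega) (hfin i)
    have hmem : c ∈ {c | (∀ x, p.2 x ≠ c) ∧ c < p.2 i} := by
      rw [heq]
      exact ⟨hc, hle⟩
    exact hmem.2
  · intro hu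
    funext i
    have heq : {c | (∀ x, p.2 x ≠ c) ∧ c < p.2 i} =
        {c | (∀ x, p.2 x ≠ c) ∧ p.1 (p.2 i) ≤ p.1 c} :=
      (hsub i).antisymm fun c hc => ⟨hc.1, hu i c hc.1 hc.2⟩
    rw [hbox, ← heq, ← snd_eq_ncard_untouched_add_labelRank hanti i]

end phi

section inverse
variable {n k : ℕ}

theorem phiCGM_psiCGM {q : (ℕ → ℕ) × (Fin k → ℕ)} (ha : Antitone q.1)
    (hs : (support q.1).Finite) : phiCGM k (psiCGM k q) = q := by
  have hR := antitone_rowLengths ha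
  have hRs := finite_support_rowLengths hs
  have hsnd : (phiCGM k (psiCGM k q)).2 = q.2 :=
    funext fun i => by simp only [phiCGM, psiCGM_fst_apply_snd ha hs i, Nat.add_sub_cancel]
  refine Prod.ext (funext fun j => ?_) hsnd
  have hsplit := conjugate_eq_phiCGM_fst_add (p := psiCGM k q) (finite_support_conjugate hRs)
    (strictAntiLex_add_labelRank q.2 ha).injective j
  rw [show (psiCGM k q).1 ∘ (psiCGM k q).2 = (q.2 · + 1) from
      funext (psiCGM_fst_apply_snd ha hs)] at hsplit
  change conjugate (conjugate (rowLengths q)) j = _ at hsplit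
  rw [conjugate_conjugate hR hRs, rowLengths, Pi.add_apply] at hsplit
  omega

theorem psiCGM_phiCGM {p : (ℕ → ℕ) × (Fin k → ℕ)} (hp : IsFixedPoint n k p) :
    psiCGM k (phiCGM k p) = p := by
  obtain ⟨hμ, hs, -, hb, hpos, hstages⟩ := hp
  have hrf := (antitone_stages_iff hμ hb hpos).1 hstages
  have hanti := hrf.strictAntiLex hμ hb hpos
  refine Prod.ext ?_ ((psiCGM_phiCGM_snd_eq_iff hμ hs hpos hanti).2
    ((rightmostFirst_iff_untouchedLeft hμ hanti).1 hrf))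
  change conjugate (rowLengths (phiCGM k p)) = p.1
  rw [rowLengths_phiCGM hs hb hpos, conjugate_conjugate hμ hs]

theorem isPSPair_phiCGM {p : (ℕ → ℕ) × (Fin k → ℕ)} (hp : IsFixedPoint n k p) :
    IsPSPair n k (phiCGM k p) := by
  obtain ⟨-, hs, hsum, hb, hpos, -⟩ := hp
  have hfin : (support (phiCGM k p).1).Finite :=
    (finite_support_conjugate hs).subset fun j hj => by
      have := conjugate_eq_phiCGM_fst_add hs hb j
      simp only [mem_support] at hj ⊢
      omega
  refine ⟨antitone_phiCGM_fst hs, hfin, ?_⟩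
  rw [← finsum_rowLengths hfin, rowLengths_phiCGM hs hb hpos, finsum_conjugate hs, hsum]

theorem isFixedPoint_psiCGM {q : (ℕ → ℕ) × (Fin k → ℕ)} (hq : IsPSPair n k q) :
    IsFixedPoint n k (psiCGM k q) := by
  obtain ⟨ha, hs, hsum⟩ := hq
  have hRs := finite_support_rowLengths hs
  have hμ : Antitone (psiCGM k q).1 := conjugate_antitone hRs
  have hpos : ∀ i, 0 < (psiCGM k q).1 ((psiCGM k q).2 i) := fun i =>
    (psiCGM_fst_apply_snd ha hs i).symm ▸ Nat.succ_pos _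
  have hanti : StrictAntiLex (phiCGM k (psiCGM k q)).2 (psiCGM k q).2 := by
    rw [phiCGM_psiCGM ha hs]
    exact strictAntiLex_add_labelRank q.2 ha
  have hbox : (psiCGM k (phiCGM k (psiCGM k q))).2 = (psiCGM k q).2 := by
    rw [phiCGM_psiCGM ha hs]
  refine ⟨hμ, finite_support_conjugate hRs, ?_, hanti.injective, hpos,
    (antitone_stages_iff hμ hanti.injective hpos).2 ?_⟩
  · rw [← hsum, ← finsum_rowLengths hs]
    exact finsum_conjugate hRs
  · exact (rightmostFirst_iff_untouchedLeft hμ hanti).2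
      ((psiCGM_phiCGM_snd_eq_iff hμ (finite_support_conjugate hRs) hpos hanti).1 hbox)

end inverse

theorem phiCGM_bijective_general (n k : ℕ) :
    Set.BijOn (phiCGM k) {p | IsFixedPoint n k p} {q | IsPSPair n k q} :=
  Set.InvOn.bijOn ⟨fun _ hp => psiCGM_phiCGM hp, fun _ hq => phiCGM_psiCGM hq.1 hq.2.1⟩
    (fun _ => isPSPair_phiCGM) (fun _ => isFixedPoint_psiCGM)

/-- `φ` is a bijection from the fixed points of `PFH_{n,n-k}` onto the pairs
`(λ | γ)` with `|λ| + |γ| = n - k`. -/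
theorem phiCGM_bijective (n k : ℕ) (hkn : k ≤ n) :
    Set.BijOn (phiCGM k) {p | IsFixedPoint n k p} {q | IsPSPair n k q} :=
  phiCGM_bijective_general n k
end

section
/- Let v = s_k ··· ŝ_{t_r} ··· ŝ_{t_1} ··· s_1 (the product of simple transpositions s_k down to s_1 omitting s_{t_r},...,s_{t_1}, where 1 ≤ t_1 < ··· < t_r ≤ k), acting on (k+1)-tuples. Applying the operators T_k^{-1} ··· T_1^{-1}, where T_i^{-1} v_u = ((1-t^{-1})u_i/(u_i - u_{i+1})) v_u + ((t^{-1}u_i - u_{i+1})/(u_i - u_{i+1})) v_{s_i(u)}, to the basis vector v_{(x,w_1,...,w_k)}, the coefficient of v_{v(x,w_1,...,w_k)} in the expansion equals ((1-t^{-1})x/(x-w_{t_1})) · ∏_{u=1}^{r-1}((1-t^{-1})w_{t_u}/(w_{t_u}-w_{t_{u+1}})) · ∏_{j=1}^{t_1-1}((t^{-1}x-w_j)/(x-w_j)) · ∏_{u=1}^{r}∏_{j=t_u+1}^{t_{u+1}-1}((t^{-1}w_{t_u}-w_j)/(w_{t_u}-w_j)), with t_{r+1} := k+1. -/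
/-!
Expanding `T_k⁻¹ ⋯ T_1⁻¹ v_{(x,w)}` is a sum over paths: at step `i` the current tuple either
stays (diagonal term) or has its entries `i, i+1` swapped (off-diagonal term). After `m` steps
every summand still agrees with `(x,w)` beyond position `m`, so, the entries being distinct, the
tuple reached by choosing the diagonal term exactly at `t_1, …, t_r` receives no contribution from
any other path, and its coefficient is the product of the step coefficients along that path. The
entry at position `i` when `T_i⁻¹` acts is `x` before `t_1` and `w_{t_u}` from `t_u` up to
`t_{u+1}`, which gives the four products; putting `t_0 = 0` and `w_0 = x` treats the first block
like the others.
-/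

open Finset

variable {K : Type*} [Field K]

/-- The operator `T_a⁻¹` (acting at positions `a, a+1`, 0-indexed) on the free module
on `(k+1)`-tuples. -/
noncomputable def TinvOp (t : K) {k : ℕ} (a : Fin k)
    (f : (Fin (k + 1) → K) →₀ K) : (Fin (k + 1) → K) →₀ K :=
  f.sum fun u c =>
    c • (((1 - t⁻¹) * u a.castSucc / (u a.castSucc - u a.succ)) •
          Finsupp.single u (1 : K)
        + ((t⁻¹ * u a.castSucc - u a.succ) / (u a.castSucc - u a.succ)) •
          Finsupp.single (u ∘ (Equiv.swap a.castSucc a.succ)) (1 : K))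

/-- `T_k⁻¹ ⋯ T_1⁻¹` applied to `f` (apply `T_1⁻¹` first). -/
noncomputable def TinvComposite (t : K) (k : ℕ)
    (f : (Fin (k + 1) → K) →₀ K) : (Fin (k + 1) → K) →₀ K :=
  (List.finRange k).foldl (fun g a => TinvOp t a g) f

/-- The tuple `v(x,w_1,…,w_k)`, where `v = s_k ⋯ ŝ_{t_r} ⋯ ŝ_{t_1} ⋯ s_1` applies the
simple transpositions `s_1, s_2, …, s_k` in this order, omitting those with index in
`I_1 = {ts 1, …, ts r}`. -/
noncomputable def vTuple (k r : ℕ) (ts : ℕ → ℕ) (xw : Fin (k + 1) → K) :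
    Fin (k + 1) → K :=
  ((List.finRange k).filter
      (fun (a : Fin k) => decide (∀ u ∈ Finset.Icc (1 : ℕ) r, ts u ≠ (a : ℕ) + 1))).foldl
    (fun (u : Fin (k + 1) → K) (a : Fin k) => u ∘ (Equiv.swap a.castSucc a.succ)) xw

def diagCoeff (t a b : K) : K := (1 - t⁻¹) * a / (a - b)

def offDiagCoeff (t a b : K) : K := (t⁻¹ * a - b) / (a - b)

lemma TinvOp_apply (t : K) {k : ℕ} (a : Fin k) (f : (Fin (k + 1) → K) →₀ K)
    (V : Fin (k + 1) → K) :
    TinvOp t a f V =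
      diagCoeff t (V a.castSucc) (V a.succ) * f V
      + offDiagCoeff t (V a.succ) (V a.castSucc) * f (V ∘ Equiv.swap a.castSucc a.succ) := by
  classical
  have hσ (u : Fin (k + 1) → K) :
      u ∘ Equiv.swap a.castSucc a.succ = V ↔ u = V ∘ Equiv.swap a.castSucc a.succ := by
    rw [← Equiv.comp_symm_eq, Equiv.symm_swap]
  simp only [TinvOp, Finsupp.sum_apply, Finsupp.smul_apply, Finsupp.add_apply,
    Finsupp.single_apply, smul_eq_mul, mul_add, mul_ite, mul_one, mul_zero, hσ]
  rw [Finsupp.sum_add, Finsupp.sum_ite_eq', Finsupp.sum_ite_eq']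
  simp only [Finsupp.mem_support_iff, Function.comp_apply, Equiv.swap_apply_left,
    Equiv.swap_apply_right, diagCoeff, offDiagCoeff]
  split_ifs <;> simp_all [mul_comm]

lemma take_finRange_succ {k : ℕ} (a : Fin k) :
    (List.finRange k).take (a + 1) = (List.finRange k).take a ++ [a] := by
  simp [List.take_add_one]

lemma swap_castSucc_succ_apply_of_lt {k : ℕ} {a : Fin k} {p : Fin (k + 1)}
    (hp : (a : ℕ) + 1 < p) : Equiv.swap a.castSucc a.succ p = p :=
  Equiv.swap_apply_of_ne_of_ne (by rw [Ne, Fin.ext_iff, Fin.val_castSucc]; omega)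
    (by rw [Ne, Fin.ext_iff, Fin.val_succ]; omega)

noncomputable def TinvPartial (t : K) {k : ℕ} (xw : Fin (k + 1) → K) (m : ℕ) :
    (Fin (k + 1) → K) →₀ K :=
  ((List.finRange k).take m).foldl (fun g a => TinvOp t a g) (Finsupp.single xw 1)

lemma TinvComposite_eq_TinvPartial (t : K) {k : ℕ} (xw : Fin (k + 1) → K) :
    TinvComposite t k (Finsupp.single xw 1) = TinvPartial t xw k := by
  rw [TinvPartial, List.take_of_length_le (by simp), TinvComposite]

lemma TinvPartial_succ (t : K) {k : ℕ} (xw : Fin (k + 1) → K) (a : Fin k) :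
    TinvPartial t xw (a + 1) = TinvOp t a (TinvPartial t xw a) := by
  rw [TinvPartial, take_finRange_succ, List.foldl_append]
  rfl

lemma TinvPartial_apply_eq_zero (t : K) {k : ℕ} (xw : Fin (k + 1) → K) {m : ℕ}
    {V : Fin (k + 1) → K} {p : Fin (k + 1)} (hp : m < p) (hV : V p ≠ xw p) :
    TinvPartial t xw m V = 0 := by
  induction m generalizing V with
  | zero => exact Finsupp.single_eq_of_ne' fun h => hV (congrFun h.symm p)
  | succ m ih =>
    let a : Fin k := ⟨m, by omega⟩
    have hfix := swap_castSucc_succ_apply_of_lt (a := a) hp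
    rw [TinvPartial_succ t xw a, TinvOp_apply, ih (by omega) hV,
      ih (by omega) (by rwa [Function.comp_apply, hfix]), mul_zero, mul_zero, add_zero]

section swapTuple

variable {α : Type*} {k : ℕ} (S : Finset ℕ) (xw : Fin (k + 1) → α)

def swapTuple (m : ℕ) : Fin (k + 1) → α :=
  (((List.finRange k).take m).filter fun a : Fin k => (a : ℕ) + 1 ∉ S).foldl
    (fun u a => u ∘ Equiv.swap a.castSucc a.succ) xw

lemma vTuple_eq_swapTuple (r : ℕ) (ts : ℕ → ℕ) :
    vTuple k r ts xw = swapTuple ((Icc 1 r).image ts) xw k := by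
  rw [swapTuple, List.take_of_length_le (by simp), vTuple]
  congr 1
  refine List.filter_congr fun a _ => ?_
  simp

variable {S}

lemma swapTuple_succ_of_mem {a : Fin k} (ha : (a : ℕ) + 1 ∈ S) :
    swapTuple S xw (a + 1) = swapTuple S xw a := by
  simp [swapTuple, take_finRange_succ, List.filter_append, ha]

lemma swapTuple_succ_of_notMem {a : Fin k} (ha : (a : ℕ) + 1 ∉ S) :
    swapTuple S xw (a + 1) = swapTuple S xw a ∘ Equiv.swap a.castSucc a.succ := by
  simp [swapTuple, take_finRange_succ, List.filter_append, ha]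

lemma swapTuple_apply_of_lt {m : ℕ} {p : Fin (k + 1)} (hp : m < p) :
    swapTuple S xw m p = xw p := by
  induction m with
  | zero => rfl
  | succ m ih =>
    let a : Fin k := ⟨m, by omega⟩
    by_cases ha : (a : ℕ) + 1 ∈ S
    · rw [swapTuple_succ_of_mem xw ha, ih (by omega)]
    · rw [swapTuple_succ_of_notMem xw ha, Function.comp_apply,
        swap_castSucc_succ_apply_of_lt hp, ih (by omega)]

lemma swapTuple_injective (hinj : Function.Injective xw) (m : ℕ) :
    Function.Injective (swapTuple S xw m) := by
  rw [swapTuple]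
  generalize xw = u at hinj
  induction ((List.finRange k).take m).filter fun a : Fin k => (a : ℕ) + 1 ∉ S
    generalizing u with
  | nil => exact hinj
  | cons a l ih => exact ih _ (hinj.comp (Equiv.injective _))

/-- The entry standing at position `m` of `swapTuple S xw m` when `xw = w` on `Fin (k + 1)`:
the swap `s_{m+1}` carries it one step further right, an omitted swap leaves it behind and
`w (m + 1)` is carried on instead. -/
def carried (S : Finset ℕ) (w : ℕ → α) : ℕ → α
  | 0 => w 0
  | m + 1 => if m + 1 ∈ S then w (m + 1) else carried S w m

lemma swapTuple_apply_self {w : ℕ → α} (hxw : ∀ i : Fin (k + 1), xw i = w i) (m : ℕ)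
    (hm : m < k + 1) : swapTuple S xw m ⟨m, hm⟩ = carried S w m := by
  induction m with
  | zero => exact hxw 0
  | succ m ih =>
    let a : Fin k := ⟨m, by omega⟩
    by_cases ha : (a : ℕ) + 1 ∈ S
    · rw [swapTuple_succ_of_mem xw ha, swapTuple_apply_of_lt xw (p := ⟨m + 1, hm⟩) m.lt_succ_self,
        hxw, carried, if_pos ha]
    · rw [swapTuple_succ_of_notMem xw ha, carried, if_neg ha]
      exact (congrArg (swapTuple S xw m) (Equiv.swap_apply_right a.castSucc a.succ)).trans (ih _)

end swapTuple

def pathFactor (t : K) (S : Finset ℕ) (w : ℕ → K) (i : ℕ) : K :=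
  if i + 1 ∈ S then diagCoeff t (carried S w i) (w (i + 1))
  else offDiagCoeff t (carried S w i) (w (i + 1))

section step

variable (t : K) {k : ℕ} (xw : Fin (k + 1) → K) (a : Fin k) {U : Fin (k + 1) → K}
  (hU : U a.succ = xw a.succ) (hU' : U a.castSucc ≠ U a.succ)
include hU hU'

-- `U ∘ swap` differs from `xw` at `a.succ`, a position the first `a` operators do not touch.
lemma TinvPartial_swap_apply_eq_zero :
    TinvPartial t xw a (U ∘ Equiv.swap a.castSucc a.succ) = 0 :=
  TinvPartial_apply_eq_zero t xw (p := a.succ) (by simp)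
    (by rwa [Function.comp_apply, Equiv.swap_apply_right, ← hU])

lemma TinvPartial_succ_apply :
    TinvPartial t xw (a + 1) U = diagCoeff t (U a.castSucc) (U a.succ) * TinvPartial t xw a U := by
  rw [TinvPartial_succ, TinvOp_apply, TinvPartial_swap_apply_eq_zero t xw a hU hU', mul_zero,
    add_zero]

lemma TinvPartial_succ_apply_swap :
    TinvPartial t xw (a + 1) (U ∘ Equiv.swap a.castSucc a.succ) =
      offDiagCoeff t (U a.castSucc) (U a.succ) * TinvPartial t xw a U := by
  have hσσ : (U ∘ Equiv.swap a.castSucc a.succ) ∘ Equiv.swap a.castSucc a.succ = U := by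
    ext; simp
  rw [TinvPartial_succ, TinvOp_apply, TinvPartial_swap_apply_eq_zero t xw a hU hU', hσσ]
  simp

end step

lemma TinvPartial_apply_swapTuple (t : K) {k : ℕ} (S : Finset ℕ) {xw : Fin (k + 1) → K}
    {w : ℕ → K} (hxw : ∀ i : Fin (k + 1), xw i = w i) (hinj : Function.Injective xw) {m : ℕ}
    (hm : m ≤ k) :
    TinvPartial t xw m (swapTuple S xw m) = ∏ i ∈ range m, pathFactor t S w i := by
  induction m with
  | zero => exact (Finsupp.single_eq_same).trans (prod_range_zero _).symm
  | succ m ih =>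
    let a : Fin k := ⟨m, by omega⟩
    set U := swapTuple S xw m
    have hU : U a.succ = xw a.succ := swapTuple_apply_of_lt xw (Nat.lt_succ_self m)
    have hU' : U a.castSucc ≠ U a.succ :=
      (swapTuple_injective xw hinj m).ne Fin.castSucc_lt_succ.ne
    have hcarried : U a.castSucc = carried S w m := swapTuple_apply_self xw hxw m (by omega)
    have hnext : U a.succ = w (m + 1) := hU.trans (hxw _)
    rw [prod_range_succ, ← ih (by omega), pathFactor]
    by_cases ha : (a : ℕ) + 1 ∈ S
    · rw [swapTuple_succ_of_mem xw ha, TinvPartial_succ_apply t xw a hU hU', if_pos ha,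
        hcarried, hnext, mul_comm]
    · rw [swapTuple_succ_of_notMem xw ha, TinvPartial_succ_apply_swap t xw a hU hU', if_neg ha,
        hcarried, hnext, mul_comm]

lemma StrictMonoOn.apply_lt_apply_succ {β : Type*} [Preorder β] {s : ℕ → β} {n v : ℕ}
    (hs : StrictMonoOn s (Set.Iic n)) (hv : v < n) : s v < s (v + 1) :=
  hs (Set.mem_Iic.mpr hv.le) (Set.mem_Iic.mpr hv) v.lt_succ_self

section blocks

variable {s : ℕ → ℕ} {r : ℕ} (hs : StrictMonoOn s (Set.Iic (r + 1)))
include hs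

lemma notMem_image_of_lt_of_lt {v j : ℕ} (hv : v ≤ r) (hlo : s v < j) (hhi : j < s (v + 1)) :
    j ∉ (Icc 1 r).image s := by
  simp only [mem_image, mem_Icc, not_exists, not_and]
  rintro u ⟨-, hu⟩ rfl
  rcases le_or_gt u v with huv | hvu
  · exact (hs.monotoneOn (Set.mem_Iic.mpr (by omega)) (Set.mem_Iic.mpr (by omega)) huv).not_gt hlo
  · exact (hs.monotoneOn (Set.mem_Iic.mpr (by omega)) (Set.mem_Iic.mpr (by omega)) hvu).not_gt hhi

variable (hs0 : s 0 = 0)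
include hs0

lemma carried_image_eq {α : Type*} (w : ℕ → α) {v m : ℕ} (hv : v ≤ r) (hlo : s v ≤ m)
    (hhi : m < s (v + 1)) : carried ((Icc 1 r).image s) w m = w (s v) := by
  induction m with
  | zero => rw [Nat.le_zero.mp hlo]; rfl
  | succ m ih =>
    rw [carried]
    rcases hlo.eq_or_lt with heq | hlt
    · have hv0 : v ≠ 0 := by rintro rfl; omega
      rw [← heq, if_pos (mem_image_of_mem s (mem_Icc.mpr ⟨by omega, hv⟩))]
    · rw [if_neg (notMem_image_of_lt_of_lt hs hv hlt hhi), ih (by omega) (by omega)]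

variable (t : K) (w : ℕ → K)

lemma pathFactor_of_lt {v i : ℕ} (hv : v ≤ r) (hlo : s v ≤ i) (hhi : i + 1 < s (v + 1)) :
    pathFactor t ((Icc 1 r).image s) w i = offDiagCoeff t (w (s v)) (w (i + 1)) := by
  rw [pathFactor, if_neg (notMem_image_of_lt_of_lt hs hv (by omega) hhi),
    carried_image_eq hs hs0 w hv hlo (by omega)]

lemma pathFactor_sub_one {v : ℕ} (hv : v < r) :
    pathFactor t ((Icc 1 r).image s) w (s (v + 1) - 1) =
      diagCoeff t (w (s v)) (w (s (v + 1))) := by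
  have hlt : s v < s (v + 1) := hs.apply_lt_apply_succ (by omega)
  rw [pathFactor, Nat.sub_add_cancel (by omega),
    if_pos (mem_image_of_mem s (mem_Icc.mpr ⟨by omega, hv⟩)),
    carried_image_eq hs hs0 w hv.le (by omega) (by omega)]

lemma prod_pathFactor_Ico {v : ℕ} (hv : v ≤ r) :
    ∏ i ∈ Ico (s v) (s (v + 1) - 1), pathFactor t ((Icc 1 r).image s) w i =
      ∏ j ∈ Ioo (s v) (s (v + 1)), offDiagCoeff t (w (s v)) (w j) := by
  have hlt : s v < s (v + 1) := hs.apply_lt_apply_succ (by omega)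
  rw [prod_congr rfl fun i hi => pathFactor_of_lt hs hs0 t w hv (mem_Ico.mp hi).1
      (by have := (mem_Ico.mp hi).2; omega),
    prod_Ico_add' (fun j => offDiagCoeff t (w (s v)) (w j)), Nat.sub_add_cancel (by omega),
    Ico_add_one_left_eq_Ioo]

lemma prod_range_pathFactor_of_le {n : ℕ} (hn : n ≤ r) :
    ∏ i ∈ range (s n), pathFactor t ((Icc 1 r).image s) w i =
      ∏ v ∈ range n, ((∏ j ∈ Ioo (s v) (s (v + 1)), offDiagCoeff t (w (s v)) (w j)) *
        diagCoeff t (w (s v)) (w (s (v + 1)))) := by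
  induction n with
  | zero => rw [hs0]; rfl
  | succ n ih =>
    have hlt : s n < s (n + 1) := hs.apply_lt_apply_succ (by omega)
    rw [prod_range_succ, ← ih (by omega), ← prod_pathFactor_Ico hs hs0 t w (v := n) (by omega),
      ← pathFactor_sub_one hs hs0 t w (v := n) (by omega), ← mul_assoc,
      prod_range_mul_prod_Ico _ (by omega), ← prod_range_succ, Nat.sub_add_cancel (by omega)]

lemma prod_range_pathFactor {k : ℕ} (hk : s (r + 1) = k + 1) :
    ∏ i ∈ range k, pathFactor t ((Icc 1 r).image s) w i =
      (∏ v ∈ range r, diagCoeff t (w (s v)) (w (s (v + 1)))) *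
        ∏ v ∈ range (r + 1), ∏ j ∈ Ioo (s v) (s (v + 1)), offDiagCoeff t (w (s v)) (w j) := by
  have hlt : s r < s (r + 1) := hs.apply_lt_apply_succ r.lt_succ_self
  rw [← prod_range_mul_prod_Ico _ (show s r ≤ k by omega),
    prod_range_pathFactor_of_le hs hs0 t w le_rfl,
    show k = s (r + 1) - 1 by omega, prod_pathFactor_Ico hs hs0 t w le_rfl,
    prod_mul_distrib, prod_range_succ]
  ring

end blocks

lemma prod_Icc_one_eq_prod_range {M : Type*} [CommMonoid M] (f : ℕ → M) (n : ℕ) :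
    ∏ i ∈ Icc 1 n, f i = ∏ i ∈ range n, f (i + 1) := by
  rw [range_eq_Ico, prod_Ico_add', zero_add, Ico_add_one_right_eq_Icc]

lemma strictMonoOn_update_zero {ts : ℕ → ℕ} {k r : ℕ}
    (hmono : ∀ u v : ℕ, 1 ≤ u → u < v → v ≤ r → ts u < ts v)
    (h1 : 1 ≤ ts 1) (hk : ts r ≤ k) (htop : ts (r + 1) = k + 1) :
    StrictMonoOn (Function.update ts 0 0) (Set.Iic (r + 1)) := by
  refine strictMonoOn_Iic_of_lt_succ fun m hm => ?_
  rw [Order.succ_eq_add_one, Function.update_of_ne (Nat.add_one_ne_zero m)]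
  rcases m.eq_zero_or_pos with rfl | hm0
  · rw [Function.update_self]
    exact h1
  · rw [Function.update_of_ne hm0.ne']
    rcases (Nat.lt_succ_iff.mp hm).lt_or_eq with hmr | rfl
    · exact hmono m (m + 1) hm0 (by omega) hmr
    · omega

lemma prod_blocks_reindex (t x : K) {w w' : ℕ → K} {ts s : ℕ → ℕ} {r : ℕ} (hr : 1 ≤ r)
    (hs0 : s 0 = 0) (hx : w' 0 = x) (hsts : ∀ u ≠ 0, s u = ts u) (hw : ∀ j ≠ 0, w' j = w j)
    (hts : ∀ u, 1 ≤ u → u ≤ r + 1 → ts u ≠ 0) :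
    (∏ v ∈ range r, diagCoeff t (w' (s v)) (w' (s (v + 1)))) *
        ∏ v ∈ range (r + 1), ∏ j ∈ Ioo (s v) (s (v + 1)), offDiagCoeff t (w' (s v)) (w' j) =
      diagCoeff t x (w (ts 1)) * (∏ u ∈ Icc 1 (r - 1), diagCoeff t (w (ts u)) (w (ts (u + 1))))
        * (∏ j ∈ Icc 1 (ts 1 - 1), offDiagCoeff t x (w j))
        * ∏ u ∈ Icc 1 r, ∏ j ∈ Icc (ts u + 1) (ts (u + 1) - 1),
            offDiagCoeff t (w (ts u)) (w j) := by
  obtain ⟨r, rfl⟩ := Nat.exists_eq_add_of_le' hr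
  have hD : ∏ v ∈ range r, diagCoeff t (w' (s (v + 1))) (w' (s (v + 1 + 1))) =
      ∏ u ∈ Icc 1 r, diagCoeff t (w (ts u)) (w (ts (u + 1))) := by
    rw [prod_Icc_one_eq_prod_range]
    refine prod_congr rfl fun v hv => ?_
    simp only [mem_range] at hv
    rw [hsts _ (by omega), hsts _ (by omega), hw _ (hts _ (by omega) (by omega)),
      hw _ (hts _ (by omega) (by omega))]
  have hG : ∏ v ∈ range (r + 1), ∏ j ∈ Ioo (s (v + 1)) (s (v + 1 + 1)),
        offDiagCoeff t (w' (s (v + 1))) (w' j) =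
      ∏ u ∈ Icc 1 (r + 1), ∏ j ∈ Icc (ts u + 1) (ts (u + 1) - 1),
        offDiagCoeff t (w (ts u)) (w j) := by
    rw [prod_Icc_one_eq_prod_range]
    refine prod_congr rfl fun v hv => ?_
    simp only [mem_range] at hv
    rw [hsts _ (by omega), hsts _ (by omega), Icc_add_one_sub_one_eq_Ioo]
    refine prod_congr rfl fun j hj => ?_
    simp only [mem_Ioo] at hj
    rw [hw _ (hts _ (by omega) (by omega)), hw j (by omega)]
  have hG0 : ∏ j ∈ Ioo (s 0) (s (0 + 1)), offDiagCoeff t (w' (s 0)) (w' j) =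
      ∏ j ∈ Icc 1 (ts 1 - 1), offDiagCoeff t x (w j) := by
    rw [hs0, hsts 1 one_ne_zero, hx, ← Icc_add_one_sub_one_eq_Ioo]
    exact prod_congr rfl fun j hj => by rw [hw j (by simp at hj; omega)]
  rw [prod_range_succ', prod_range_succ', Nat.add_sub_cancel, hD, hG, hG0, zero_add, hs0, hx,
    hsts 1 one_ne_zero, hw _ (hts 1 le_rfl (by omega))]
  ring

theorem TinvComposite_coeff_general (t : K) (k r : ℕ) (ts : ℕ → ℕ) (x : K) (w : ℕ → K)
    (hr : 1 ≤ r)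
    (hmono : ∀ u v : ℕ, 1 ≤ u → u < v → v ≤ r → ts u < ts v)
    (h1 : 1 ≤ ts 1) (hk : ts r ≤ k) (htop : ts (r + 1) = k + 1)
    (xw : Fin (k + 1) → K)
    (hxw : ∀ i : Fin (k + 1), xw i = if (i : ℕ) = 0 then x else w (i : ℕ))
    (hinj : Function.Injective xw) :
    (TinvComposite t k (Finsupp.single xw 1)) (vTuple k r ts xw) =
      ((1 - t⁻¹) * x / (x - w (ts 1)))
        * (∏ u ∈ Icc 1 (r - 1), (1 - t⁻¹) * w (ts u) / (w (ts u) - w (ts (u + 1))))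
        * (∏ j ∈ Icc 1 (ts 1 - 1), (t⁻¹ * x - w j) / (x - w j))
        * (∏ u ∈ Icc 1 r, ∏ j ∈ Icc (ts u + 1) (ts (u + 1) - 1),
            (t⁻¹ * w (ts u) - w j) / (w (ts u) - w j)) := by
  set s := Function.update ts 0 0
  set w' := Function.update w 0 x
  have hs : StrictMonoOn s (Set.Iic (r + 1)) := strictMonoOn_update_zero hmono h1 hk htop
  have hsts (u : ℕ) (hu : u ≠ 0) : s u = ts u := Function.update_of_ne hu _ _
  have hts (u : ℕ) (hu : 1 ≤ u) (hur : u ≤ r + 1) : ts u ≠ 0 := by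
    have := hs (Set.mem_Iic.mpr (Nat.zero_le _)) (Set.mem_Iic.mpr hur) hu
    rw [hsts u (by omega)] at this
    simp [s] at this
    omega
  have hxw' (i : Fin (k + 1)) : xw i = w' i := by
    rw [hxw]
    split_ifs with hi <;> simp [w', hi]
  rw [TinvComposite_eq_TinvPartial, vTuple_eq_swapTuple,
    image_congr fun u hu => (hsts u (by simp at hu; omega)).symm,
    TinvPartial_apply_swapTuple t _ hxw' hinj le_rfl,
    prod_range_pathFactor hs (by simp [s]) t w' (by simpa [s] using htop)]
  exact prod_blocks_reindex t x hr (by simp [s]) (by simp [w']) hsts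
    (fun j hj => Function.update_of_ne hj _ _) hts

theorem TinvComposite_coeff (t : K) (k r : ℕ) (ts : ℕ → ℕ) (x : K) (w : ℕ → K)
    (hr : 1 ≤ r)
    (hmono : ∀ u v : ℕ, 1 ≤ u → u < v → v ≤ r → ts u < ts v)
    (h1 : 1 ≤ ts 1) (hk : ts r ≤ k) (htop : ts (r + 1) = k + 1)
    (ht : t ≠ 0)
    (xw : Fin (k + 1) → K)
    (hxw : ∀ i : Fin (k + 1), xw i = if (i : ℕ) = 0 then x else w (i : ℕ))
    (hinj : Function.Injective xw) (hne : ∀ i, xw i ≠ 0) :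
    (TinvComposite t k (Finsupp.single xw 1)) (vTuple k r ts xw) =
      ((1 - t⁻¹) * x / (x - w (ts 1)))
        * (∏ u ∈ Icc 1 (r - 1), (1 - t⁻¹) * w (ts u) / (w (ts u) - w (ts (u + 1))))
        * (∏ j ∈ Icc 1 (ts 1 - 1), (t⁻¹ * x - w j) / (x - w j))
        * (∏ u ∈ Icc 1 r, ∏ j ∈ Icc (ts u + 1) (ts (u + 1) - 1),
            (t⁻¹ * w (ts u) - w j) / (w (ts u) - w j)) :=
  TinvComposite_coeff_general t k r ts x w hr hmono h1 hk htop xw hxw hinj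
end
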